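/- With A₁, A₂, A_M as above, the map D_{j→3-j} = I - A_{3-j}A_j⁻¹ restricts to a group isomorphism from the moiré lattice R_M = A_M ℤ² onto the lattice R_{3-j} = A_{3-j} ℤ². -/

import Mathlib

/-!
Writing `D = 1 - A B⁻¹ = A (A⁻¹ - B⁻¹)` shows `D A_M = A` for the moiré matrix
`A_M = (A⁻¹ - B⁻¹)⁻¹`, so the invertible map `D` sends `A_M ℤ²` onto `D A_M ℤ² = A ℤ²`.
Swapping the two layers only changes the sign of `A_M`, which leaves its lattice unchanged.
-/

open Matrix Set

section IntLattice

variable {ι R : Type*} [Fintype ι] [CommRing R]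

def intLattice (A : Matrix ι ι R) : Set (ι → R) :=
  range fun n : ι → ℤ => A *ᵥ fun i => (n i : R)

theorem image_mulVec_intLattice (D A : Matrix ι ι R) :
    (D *ᵥ ·) '' intLattice A = intLattice (D * A) := by
  simp only [intLattice, ← range_comp, Function.comp_def, mulVec_mulVec]

theorem intLattice_neg (A : Matrix ι ι R) : intLattice (-A) = intLattice A := by
  have h_neg : ∀ n : ι → ℤ, (-A) *ᵥ (fun i => (n i : R)) = A *ᵥ fun i => ((-n) i : R) := by
    intro n
    rw [neg_mulVec, ← mulVec_neg]
    congr 1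
    ext i
    simp
  simp only [intLattice, h_neg]
  exact neg_surjective.range_comp fun n : ι → ℤ => A *ᵥ fun i => (n i : R)

theorem bijOn_mulVec_intLattice [DecidableEq ι] {D : Matrix ι ι R} (hD : IsUnit D.det)
    (A : Matrix ι ι R) :
    BijOn (D *ᵥ ·) (intLattice A) (intLattice (D * A)) := by
  rw [← image_mulVec_intLattice]
  exact (mulVec_injective_of_det_mem_nonZeroDivisors hD.mem_nonZeroDivisors).injOn.bijOn_image

end IntLattice

section Moire

variable {ι R : Type*} [Fintype ι] [DecidableEq ι] [CommRing R] {A B : Matrix ι ι R}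

theorem inv_neg_of_isUnit_det (hA : IsUnit A.det) : (-A)⁻¹ = -A⁻¹ :=
  inv_eq_right_inv <| by rw [neg_mul_neg, mul_nonsing_inv A hA]

theorem one_sub_mul_inv_eq_mul_inv_sub_inv (hA : IsUnit A.det) :
    1 - A * B⁻¹ = A * (A⁻¹ - B⁻¹) := by
  rw [Matrix.mul_sub, mul_nonsing_inv A hA]

theorem one_sub_mul_inv_mul_inv_inv_sub_inv (hA : IsUnit A.det) (hM : IsUnit (A⁻¹ - B⁻¹).det) :
    (1 - A * B⁻¹) * (A⁻¹ - B⁻¹)⁻¹ = A := by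
  rw [one_sub_mul_inv_eq_mul_inv_sub_inv hA, Matrix.mul_assoc, mul_nonsing_inv _ hM,
    Matrix.mul_one]

theorem isUnit_det_one_sub_mul_inv (hA : IsUnit A.det) (hM : IsUnit (A⁻¹ - B⁻¹).det) :
    IsUnit (1 - A * B⁻¹).det := by
  rw [one_sub_mul_inv_eq_mul_inv_sub_inv hA, det_mul]
  exact hA.mul hM

theorem bijOn_one_sub_mul_inv_intLattice (hA : IsUnit A.det) (hM : IsUnit (A⁻¹ - B⁻¹).det) :
    BijOn ((1 - A * B⁻¹) *ᵥ ·) (intLattice (A⁻¹ - B⁻¹)⁻¹) (intLattice A) := by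
  simpa only [one_sub_mul_inv_mul_inv_inv_sub_inv hA hM] using
    bijOn_mulVec_intLattice (isUnit_det_one_sub_mul_inv hA hM) (A⁻¹ - B⁻¹)⁻¹

theorem intLattice_inv_inv_sub_inv_comm (hM : IsUnit (A⁻¹ - B⁻¹).det) :
    intLattice (B⁻¹ - A⁻¹)⁻¹ = intLattice (A⁻¹ - B⁻¹)⁻¹ := by
  rw [← neg_sub, inv_neg_of_isUnit_det hM, intLattice_neg]

end Moire

/-- The disregistry matrix `D_{j→3-j} = 1 - A_{3-j} A_j⁻¹` restricts to a bijection
(automatically additive, hence a group isomorphism) from the moiré lattice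
`R_M = A_M ℤ²` onto `R_{3-j} = A_{3-j} ℤ²`, for j = 1, 2. -/
theorem disregistry_lattice_iso (A₁ A₂ : Matrix (Fin 2) (Fin 2) ℝ)
    (hA₁ : IsUnit A₁.det) (hA₂ : IsUnit A₂.det)
    (hM : IsUnit (A₁⁻¹ - A₂⁻¹).det) (A_M : Matrix (Fin 2) (Fin 2) ℝ)
    (hAM : A_M = (A₁⁻¹ - A₂⁻¹)⁻¹)
    (R_M R₁ R₂ : Set (Fin 2 → ℝ))
    (hRM : R_M = Set.range (fun n : Fin 2 → ℤ => A_M.mulVec (fun i => (n i : ℝ))))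
    (hR₁ : R₁ = Set.range (fun n : Fin 2 → ℤ => A₁.mulVec (fun i => (n i : ℝ))))
    (hR₂ : R₂ = Set.range (fun n : Fin 2 → ℤ => A₂.mulVec (fun i => (n i : ℝ)))) :
    Set.BijOn (fun v => (1 - A₂ * A₁⁻¹).mulVec v) R_M R₂ ∧
    Set.BijOn (fun v => (1 - A₁ * A₂⁻¹).mulVec v) R_M R₁ ∧
    (∀ v w : Fin 2 → ℝ, (1 - A₂ * A₁⁻¹).mulVec (v + w)
        = (1 - A₂ * A₁⁻¹).mulVec v + (1 - A₂ * A₁⁻¹).mulVec w) ∧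
    (∀ v w : Fin 2 → ℝ, (1 - A₁ * A₂⁻¹).mulVec (v + w)
        = (1 - A₁ * A₂⁻¹).mulVec v + (1 - A₁ * A₂⁻¹).mulVec w) := by
  have hRM' : R_M = intLattice (A₁⁻¹ - A₂⁻¹)⁻¹ := by rw [hRM, hAM]; rfl
  have hM' : IsUnit (A₂⁻¹ - A₁⁻¹).det := by
    rw [← neg_sub, det_neg]
    exact (isUnit_neg_one.pow _).mul hM
  refine ⟨?_, ?_, fun v w => mulVec_add _ v w, fun v w => mulVec_add _ v w⟩
  · rw [hRM', hR₂, ← intLattice_inv_inv_sub_inv_comm hM]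
    exact bijOn_one_sub_mul_inv_intLattice hA₂ hM'
  · rw [hRM', hR₁]
    exact bijOn_one_sub_mul_inv_intLattice hA₁ hM
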